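/- arXiv:2509.07395 — 4 statements merged into one kernel-verified Lean document; each statement's English description precedes it below -/
import Mathlib

section
/- Let F be the free group on a, b and f_k ∈ Aut(F) with f_k(a) = a^k b a^{-k}, f_k(b) = a^{k-1} b a^{-k}. Then f_k^6 equals the inner automorphism of conjugation by x_k := a^k b^k (a^{-1}b)^{k-1} a^{-k} b^{-k} (ab^{-1})^{k-1}. -/
/-!
Write `k = m + 1`. Then `f = conj (aᵐ) * g`, where `g : a ↦ a b a⁻¹, b ↦ b a⁻¹` is `f_1`. Its image
in `GL₂(ℤ)` has order 6, and indeed `g⁶` is conjugation by `⁅a, b⁆`. Pushing the inner factors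
to the left gives `f⁶ = conj (aᵐ · g(aᵐ) ⋯ g⁵(aᵐ) · ⁅a, b⁆)`. Each `gⁱ(a)` is a conjugate of one of
`a^{±1}, b^{±1}, (a⁻¹b)^{±1}`, so the product of their `m`-th powers collapses to `x_k`, already in
an arbitrary group.
-/

abbrev F := FreeGroup (Fin 2)
noncomputable abbrev fa : F := FreeGroup.of 0
noncomputable abbrev fb : F := FreeGroup.of 1

/-- The element `x_k = aᵏ bᵏ (a⁻¹b)ᵏ⁻¹ a⁻ᵏ b⁻ᵏ (ab⁻¹)ᵏ⁻¹`. -/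
noncomputable def xElt (k : ℕ) : F :=
  fa ^ k * fb ^ k * (fa⁻¹ * fb) ^ (k - 1) * (fa ^ k)⁻¹ * (fb ^ k)⁻¹ * (fa * fb⁻¹) ^ (k - 1)

open scoped commutatorElement

theorem MulAut.mul_conj {G : Type*} [Group G] (φ : MulAut G) (c : G) :
    φ * MulAut.conj c = MulAut.conj (φ c) * φ := by
  ext x
  simp [MulAut.conj_apply]

theorem MulAut.conj_mul_pow {G : Type*} [Group G] (c : G) (φ : MulAut G) (n : ℕ) :
    (MulAut.conj c * φ) ^ n =
      MulAut.conj ((List.range n).map fun i => (φ ^ i) c).prod * φ ^ n := by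
  induction n with
  | zero => simp
  | succ n ih =>
    rw [pow_succ, ih, mul_assoc, ← mul_assoc (φ ^ n), MulAut.mul_conj, List.range_succ,
      List.map_append, List.prod_append, map_mul, pow_succ]
    simp only [List.map_cons, List.map_nil, List.prod_singleton, mul_assoc]

theorem orbit_pow_prod_mul_commutator {G : Type*} [Group G] (a b : G) (m : ℕ) :
    ([a, a * b * a⁻¹, a * b * a⁻¹ * a⁻¹, a * b * a⁻¹ * b⁻¹ * a⁻¹,
        a * b * a⁻¹ * b⁻¹ * a * b⁻¹ * a⁻¹, a * b * a⁻¹ * b⁻¹ * a * a * b⁻¹ * a⁻¹].map (· ^ m)).prod *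
        ⁅a, b⁆ =
      a ^ (m + 1) * b ^ (m + 1) * (a⁻¹ * b) ^ m * (a ^ (m + 1))⁻¹ * (b ^ (m + 1))⁻¹ *
        (a * b⁻¹) ^ m := by
  simp only [List.map_cons, List.map_nil, List.prod_cons, List.prod_nil, mul_one,
    commutatorElement_def]
  rw [conj_pow,
    show a * b * a⁻¹ * a⁻¹ = (a * b) * (a⁻¹ * b) * (a * b)⁻¹ by group, conj_pow,
    show a * b * a⁻¹ * b⁻¹ * a⁻¹ = (a * b) * a⁻¹ * (a * b)⁻¹ by group, conj_pow,
    show a * b * a⁻¹ * b⁻¹ * a * b⁻¹ * a⁻¹ = (a * b * a⁻¹) * b⁻¹ * (a * b * a⁻¹)⁻¹ by group,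
    conj_pow,
    show a * b * a⁻¹ * b⁻¹ * a * a * b⁻¹ * a⁻¹ =
      (a * b * a⁻¹ * b⁻¹ * a) * (a⁻¹ * b)⁻¹ * (a * b * a⁻¹ * b⁻¹ * a)⁻¹ by group, conj_pow,
    show a * b⁻¹ = a * (a⁻¹ * b)⁻¹ * a⁻¹ by group, conj_pow]
  simp only [inv_pow]
  group

section

variable {g : MulAut F} (hga : g fa = fa * fb * fa⁻¹) (hgb : g fb = fb * fa⁻¹)
include hga hgb

theorem map_range_six_pow_apply_fa :
    (List.range 6).map (fun i => (g ^ i) fa) =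
      [fa, fa * fb * fa⁻¹, fa * fb * fa⁻¹ * fa⁻¹, fa * fb * fa⁻¹ * fb⁻¹ * fa⁻¹,
        fa * fb * fa⁻¹ * fb⁻¹ * fa * fb⁻¹ * fa⁻¹, fa * fb * fa⁻¹ * fb⁻¹ * fa * fa * fb⁻¹ * fa⁻¹] := by
  simp only [List.range_succ, List.range_zero, List.nil_append, List.cons_append, List.map_cons,
    List.map_nil, List.cons.injEq, pow_succ', pow_zero, MulAut.mul_apply, MulAut.one_apply,
    map_mul, map_inv, hga, hgb]
  refine ⟨trivial, ?_, ?_, ?_, ?_, ?_, trivial⟩ <;> group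

theorem pow_six_eq_conj_commutator : g ^ 6 = MulAut.conj ⁅fa, fb⁆ := by
  refine MulEquiv.toMonoidHom_injective <| FreeGroup.ext_hom _ _ fun i => ?_
  fin_cases i <;>
  · simp only [MulEquiv.coe_toMonoidHom, MulAut.conj_apply, commutatorElement_def]
    simp only [Fin.zero_eta, Fin.mk_one, pow_succ', pow_zero, MulAut.mul_apply, MulAut.one_apply,
      map_mul, map_inv, hga, hgb]
    group

end

/-- `f_k⁶` is the inner automorphism of conjugation by `x_k`. -/
theorem stmt5 (k : ℕ) (hk : 1 ≤ k) (f : MulAut F)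
    (hfa : f fa = fa ^ k * fb * (fa ^ k)⁻¹)
    (hfb : f fb = fa ^ (k - 1) * fb * (fa ^ k)⁻¹) :
    f ^ 6 = MulAut.conj (xElt k) := by
  obtain ⟨m, rfl⟩ : ∃ m, k = m + 1 := ⟨k - 1, by omega⟩
  set g := (MulAut.conj (fa ^ m))⁻¹ * f
  have hga : g fa = fa * fb * fa⁻¹ := by
    simp only [g, MulAut.mul_apply, hfa, MulAut.conj_inv_apply]
    group
  have hgb : g fb = fb * fa⁻¹ := by
    simp only [g, MulAut.mul_apply, hfb, Nat.add_sub_cancel, MulAut.conj_inv_apply]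
    group
  rw [show f = MulAut.conj (fa ^ m) * g from (mul_inv_cancel_left _ _).symm,
    MulAut.conj_mul_pow, pow_six_eq_conj_commutator hga hgb, ← map_mul, xElt, Nat.add_sub_cancel,
    ← orbit_pow_prod_mul_commutator, ← map_range_six_pow_apply_fa hga hgb]
  simp only [List.map_map, Function.comp_def, map_pow]
end

section
/- Let F be the free group on a, b. For every positive integer k, the automorphism f_k of F defined by f_k(a) = a^k b a^{-k}, f_k(b) = a^{k-1} b a^{-k} has infinite order in Aut(F). -/
@[ext] structure UT where
  a : ℤ
  b : ℤ
  c : ℤ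
  d : ℤ
  e : ℤ
  g : ℤ

namespace UT

instance : Mul UT := ⟨fun u v => ⟨u.a + v.a, u.b + v.b + u.a * v.d,
    u.c + v.c + u.a * v.e + u.b * v.g, u.d + v.d, u.e + v.e + u.d * v.g, u.g + v.g⟩⟩
instance : One UT := ⟨⟨0,0,0,0,0,0⟩⟩
instance : Inv UT := ⟨fun u => ⟨-u.a, -u.b + u.a*u.d,
    -u.c + u.a*u.e + u.b*u.g - u.a*u.d*u.g, -u.d, -u.e + u.d*u.g, -u.g⟩⟩

@[simp] theorem mul_def (u v : UT) : u * v = ⟨u.a + v.a, u.b + v.b + u.a * v.d,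
    u.c + v.c + u.a * v.e + u.b * v.g, u.d + v.d, u.e + v.e + u.d * v.g, u.g + v.g⟩ := rfl
@[simp] theorem one_def : (1 : UT) = ⟨0,0,0,0,0,0⟩ := rfl
@[simp] theorem inv_def (u : UT) : u⁻¹ = ⟨-u.a, -u.b + u.a*u.d,
    -u.c + u.a*u.e + u.b*u.g - u.a*u.d*u.g, -u.d, -u.e + u.d*u.g, -u.g⟩ := rfl

instance : Group UT where
  mul_assoc u v w := by ext <;> simp <;> ring
  one_mul u := by ext <;> simp
  mul_one u := by ext <;> simp
  inv_mul_cancel u := by ext <;> simp <;> ring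

def A : UT := ⟨0,0,0,1,0,0⟩
def B : UT := ⟨1,0,0,0,0,1⟩

end UT

def T : ℕ → ℤ
  | 0 => 0
  | (n+1) => T n + n

namespace UT

theorem A_pow (n : ℕ) : A^n = ⟨0,0,0,n,0,0⟩ := by
  induction n with
  | zero => simp
  | succ m ih => rw [pow_succ, ih]; ext <;> simp [A] <;> push_cast <;> ring

theorem B_pow (n : ℕ) : B^n = ⟨n,0,0,0,0,n⟩ := by
  induction n with
  | zero => simp
  | succ m ih => rw [pow_succ, ih]; ext <;> simp [B] <;> push_cast <;> ring

theorem e2_pow (n : ℕ) : ∃ q, ((⟨1,0,0,-1,-1,1⟩ : UT))^n = ⟨n, -T n, q, -n, -(T n) - n, n⟩ := by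
  induction n with
  | zero => exact ⟨0, by simp [T]⟩
  | succ m ih =>
    obtain ⟨q, hq⟩ := ih
    refine ⟨q - m - T m, ?_⟩
    rw [pow_succ, hq, T]; ext <;> simp <;> push_cast <;> ring

theorem e3_pow (n : ℕ) : ∃ q, ((⟨0,1,1,-1,-1,0⟩ : UT))^n = ⟨0, n, q, -n, -n, 0⟩ := by
  induction n with
  | zero => exact ⟨0, by simp⟩
  | succ m ih =>
    obtain ⟨q, hq⟩ := ih
    refine ⟨q + 1, ?_⟩
    rw [pow_succ, hq]; ext <;> simp <;> push_cast <;> ring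

theorem e4_pow (n : ℕ) : ((⟨-1,1,2,0,-1,-1⟩ : UT))^n = ⟨-n, n, 2*n, 0, -n, -n⟩ := by
  induction n with
  | zero => simp
  | succ m ih => rw [pow_succ, ih]; ext <;> simp <;> push_cast <;> ring

theorem e5_pow (n : ℕ) : ∃ q, ((⟨-1,0,2,1,-1,-1⟩ : UT))^n = ⟨-n, -T n, q, n, -(T n) - n, -n⟩ := by
  induction n with
  | zero => exact ⟨0, by simp [T]⟩
  | succ m ih =>
    obtain ⟨q, hq⟩ := ih
    refine ⟨q + 2 + m + T m, ?_⟩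
    rw [pow_succ, hq, T]; ext <;> simp <;> push_cast <;> ring

theorem layer2_pow (z : UT) (ha : z.a = 0) (hd : z.d = 0) (hg : z.g = 0) (n : ℕ) :
    (z^n).a = 0 ∧ (z^n).d = 0 ∧ (z^n).g = 0 ∧ (z^n).b = n * z.b ∧ (z^n).e = n * z.e := by
  induction n with
  | zero => simp
  | succ m ih =>
    obtain ⟨h1, h2, h3, h4, h5⟩ := ih
    rw [pow_succ]
    refine ⟨by simp [h1, ha], by simp [h2, hd], by simp [h3, hg], ?_, ?_⟩
    · simp [h4, h1, hd]; push_cast; ring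
    · simp [h5, h2, hg]; push_cast; ring

end UT

noncomputable def G : F →* F :=
  FreeGroup.lift (fun i : Fin 2 => if i = 0 then fb else fa⁻¹ * fb)

@[simp] theorem G_fa : G fa = fb := by simp [G, FreeGroup.lift_apply_of]
@[simp] theorem G_fb : G fb = fa⁻¹ * fb := by simp [G, FreeGroup.lift_apply_of]

theorem G_six (w : F) :
    G (G (G (G (G (G w))))) = (fb⁻¹ * fa * fb * fa⁻¹) * w * (fb⁻¹ * fa * fb * fa⁻¹)⁻¹ := by
  have h : (G.comp (G.comp (G.comp (G.comp (G.comp G))))) =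
      (MulAut.conj (fb⁻¹ * fa * fb * fa⁻¹)).toMonoidHom := by
    apply FreeGroup.ext_hom
    intro i
    fin_cases i <;>
      simp [MulAut.conj_apply, map_mul, map_inv] <;> group
  have := DFunLike.congr_fun h w
  simpa [MulAut.conj_apply, mul_assoc] using this

set_option maxHeartbeats 1000000 in
/-- for every positive integer `k`, the automorphism `f_k` of `F` with
`f_k(a) = aᵏ b a⁻ᵏ`, `f_k(b) = aᵏ⁻¹ b a⁻ᵏ` has infinite order in `Aut(F)`. -/
theorem stmt7 (k : ℕ) (hk : 1 ≤ k) (f : MulAut F)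
    (hfa : f fa = fa ^ k * fb * (fa ^ k)⁻¹)
    (hfb : f fb = fa ^ (k - 1) * fb * (fa ^ k)⁻¹) :
    ¬ IsOfFinOrder f := by
  obtain ⟨m, rfl⟩ : ∃ m, k = m + 1 := ⟨k - 1, (Nat.succ_pred_eq_of_pos hk).symm⟩
  set k := m + 1 with hkdef
  -- f is conjugation by fa^k composed with G
  have hf : ∀ w : F, f w = fa ^ k * G w * (fa ^ k)⁻¹ := by
    have h : (f : F →* F) = ((MulAut.conj (fa ^ k)).toMonoidHom).comp G := by
      apply FreeGroup.ext_hom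
      intro i
      fin_cases i
      · show f fa = fa ^ k * G fa * (fa ^ k)⁻¹
        rw [hfa, G_fa]
      · have h2 : f fb = fa ^ m * fb * (fa ^ k)⁻¹ := by simpa [hkdef] using hfb
        show f fb = fa ^ k * G fb * (fa ^ k)⁻¹
        rw [h2, G_fb, hkdef]
        group
    intro w
    exact DFunLike.congr_fun h w
  set X : F := fa^k * fb^k * (fa⁻¹*fb)^k * (fb⁻¹*(fa⁻¹*fb))^k *
      (fb⁻¹*(fa*(fb⁻¹*(fa⁻¹*fb))))^k * (fb⁻¹*(fa*(fa*(fb⁻¹*(fa⁻¹*fb)))))^k *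
      (fb⁻¹ * fa * fb * fa⁻¹) with hX
  have h6 : ∀ w : F, (f^6) w = X * w * X⁻¹ := by
    intro w
    have e : (f^6) w = f (f (f (f (f (f w))))) := by
      simp [pow_succ, MulAut.mul_apply]
    rw [e]
    simp only [hf, map_mul, map_inv, map_pow, G_fa, G_fb]
    rw [G_six w, hX]
    group
  intro hfin
  obtain ⟨n, hn, hfn⟩ := isOfFinOrder_iff_pow_eq_one.mp hfin
  have h6n : ∀ w : F, w = X^n * w * (X^n)⁻¹ := by
    have hiter : ∀ (j : ℕ) (w : F), ((f^6)^j) w = X^j * w * (X^j)⁻¹ := by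
      intro j
      induction j with
      | zero => intro w; simp
      | succ i ih =>
        intro w
        rw [pow_succ, MulAut.mul_apply, h6 w, ih]
        group
    intro w
    have h1 : (f^6)^n = 1 := by
      rw [← pow_mul, mul_comm, pow_mul, hfn, one_pow]
    have h2 := hiter n w
    rw [h1] at h2
    simpa using h2
  have hcomm : X^n * fb = fb * X^n := by
    have h3 := h6n fb
    rw [eq_comm, mul_inv_eq_iff_eq_mul] at h3
    exact h3
  classical
  set ψ : F →* UT := FreeGroup.lift (fun i : Fin 2 => if i = 0 then UT.A else UT.B) with hψ
  have hψa : ψ fa = UT.A := by simp [hψ, FreeGroup.lift_apply_of]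
  have hψb : ψ fb = UT.B := by simp [hψ, FreeGroup.lift_apply_of]
  have base2 : UT.A⁻¹ * UT.B = (⟨1,0,0,-1,-1,1⟩ : UT) := by
    ext <;> simp [UT.A, UT.B]
  have base3 : UT.B⁻¹ * (UT.A⁻¹ * UT.B) = (⟨0,1,1,-1,-1,0⟩ : UT) := by
    ext <;> simp [UT.A, UT.B]
  have base4 : UT.B⁻¹ * (UT.A * (UT.B⁻¹ * (UT.A⁻¹ * UT.B))) = (⟨-1,1,2,0,-1,-1⟩ : UT) := by
    ext <;> simp [UT.A, UT.B]
  have base5 : UT.B⁻¹ * (UT.A * (UT.A * (UT.B⁻¹ * (UT.A⁻¹ * UT.B)))) = (⟨-1,0,2,1,-1,-1⟩ : UT) := by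
    ext <;> simp [UT.A, UT.B]
  obtain ⟨q2, h2⟩ := UT.e2_pow k
  obtain ⟨q3, h3⟩ := UT.e3_pow k
  obtain ⟨q5, h5⟩ := UT.e5_pow k
  have hXval : ψ X = (⟨0,0,0,(k:ℤ),0,0⟩ : UT) * ⟨(k:ℤ),0,0,0,0,(k:ℤ)⟩ *
      (⟨(k:ℤ), -T k, q2, -(k:ℤ), -(T k) - k, (k:ℤ)⟩ : UT) *
      (⟨0, (k:ℤ), q3, -(k:ℤ), -(k:ℤ), 0⟩ : UT) *
      (⟨-(k:ℤ), (k:ℤ), 2*(k:ℤ), 0, -(k:ℤ), -(k:ℤ)⟩ : UT) *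
      (⟨-(k:ℤ), -T k, q5, (k:ℤ), -(T k) - k, -(k:ℤ)⟩ : UT) *
      (UT.B⁻¹ * UT.A * UT.B * UT.A⁻¹) := by
    rw [hX]
    simp only [map_mul, map_pow, map_inv, hψa, hψb]
    rw [base5, base4, base3, base2, UT.A_pow, UT.B_pow, h2, h3, UT.e4_pow, h5]
  have ha0 : (ψ X).a = 0 := by rw [hXval]; simp [UT.A, UT.B]
  have hd0 : (ψ X).d = 0 := by rw [hXval]; simp [UT.A, UT.B]
  have hg0 : (ψ X).g = 0 := by rw [hXval]; simp [UT.A, UT.B]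
  have hbv : (ψ X).b = -2*T k - 2*(k:ℤ)^2 + 2*k - 1 := by
    rw [hXval]; simp [UT.A, UT.B]; ring
  have hev : (ψ X).e = 4*(k:ℤ)^2 - 2*T k - 4*k + 1 := by
    rw [hXval]; simp [UT.A, UT.B]; ring
  obtain ⟨-, -, -, hbn, hen⟩ := UT.layer2_pow (ψ X) ha0 hd0 hg0 n
  have hcm := congrArg ψ hcomm
  simp only [map_mul, map_pow, hψb] at hcm
  have hc := congrArg UT.c hcm
  simp only [UT.mul_def, UT.B] at hc
  have heq : (n:ℤ) * (ψ X).b = (n:ℤ) * (ψ X).e := by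
    rw [← hbn, ← hen]
    linarith [hc]
  rw [hbv, hev] at heq
  have hzero : (n:ℤ) * (6*(k:ℤ)^2 - 6*k + 2) = 0 := by linear_combination -heq
  have hkpos : (1:ℤ) ≤ (k:ℤ) := by exact_mod_cast hk
  have hpos : 0 < 6*(k:ℤ)^2 - 6*k + 2 := by nlinarith
  have : (n:ℤ) = 0 := by
    rcases mul_eq_zero.mp hzero with h | h
    · exact h
    · exact absurd h (by linarith)
  have : n = 0 := by exact_mod_cast this
  omega
end

section
/- Let F be the free group on a, b, with lower central series quotient map π: [F,F] → [F,F]/[[F,F],F] ≅ ℤ, normalized so that π([a,b]) = 1. Then for the element x_k = a^k b^k (a^{-1}b)^{k-1} a^{-k} b^{-k} (ab^{-1})^{k-1} one has π(x_k) = 3k² − 3k + 1, for every positive integer k. -/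
open scoped commutatorElement

noncomputable def N : Subgroup F := ⁅commutator F, (⊤ : Subgroup F)⁆
instance : N.Normal := Subgroup.commutator_normal _ _
noncomputable def mkQ : F →* F ⧸ N := QuotientGroup.mk' N

lemma hfc : ⁅fa, fb⁆ ∈ commutator F :=
  Subgroup.commutator_mem_commutator (Subgroup.mem_top _) (Subgroup.mem_top _)

lemma central (w : F) (hw : w ∈ commutator F) (g : F ⧸ N) : Commute (mkQ w) g := by
  obtain ⟨g', rfl⟩ := QuotientGroup.mk'_surjective N g
  show Commute (mkQ w) (mkQ g')
  rw [← commutatorElement_eq_one_iff_commute, ← map_commutatorElement]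
  exact (QuotientGroup.eq_one_iff _).mpr
    (Subgroup.commutator_mem_commutator hw (Subgroup.mem_top _))

noncomputable def A : F ⧸ N := mkQ fa
noncomputable def B : F ⧸ N := mkQ fb
noncomputable def C : F ⧸ N := mkQ ⁅fa, fb⁆

lemma hC (g : F ⧸ N) : Commute C g := central _ hfc g

lemma cswap (i : ℤ) (g : F ⧸ N) : g * C ^ i = C ^ i * g :=
  (((hC g).zpow_left i).eq).symm

lemma cswapR (i : ℤ) (g h : F ⧸ N) : g * (C ^ i * h) = C ^ i * (g * h) := by
  rw [← mul_assoc, cswap, mul_assoc]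

lemma hCAB : C = ⁅A, B⁆ := map_commutatorElement mkQ fa fb

lemma semi : SemiconjBy A B (C * B) := by
  show A * B = C * B * A
  rw [hCAB, commutatorElement_def]; group

lemma conj1 (n : ℤ) : A * B ^ n = C ^ n * B ^ n * A := by
  have h := semi.zpow_right n
  rwa [(hC B).mul_zpow] at h

lemma key' : C * (A⁻¹ * B) = B * A⁻¹ := by
  have h := semi.inv_symm_left.eq
  rw [← h, ← mul_assoc, ← mul_assoc, (hC A⁻¹).eq]

lemma semi2 : SemiconjBy A⁻¹ B (C⁻¹ * B) := by
  show A⁻¹ * B = C⁻¹ * B * A⁻¹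
  rw [mul_assoc, ← key']; group

lemma conj1inv (n : ℤ) : A⁻¹ * B ^ n = C ^ (-n) * B ^ n * A⁻¹ := by
  have h := semi2.zpow_right n
  rwa [((hC B).inv_left).mul_zpow, inv_zpow, ← zpow_neg] at h

lemma swapAB (n : ℤ) (h : F ⧸ N) : A * (B ^ n * h) = C ^ n * (B ^ n * (A * h)) := by
  rw [← mul_assoc, conj1]; group

lemma swapAB' (n : ℤ) (h : F ⧸ N) :
    A⁻¹ * (B ^ n * h) = C ^ (-n) * (B ^ n * (A⁻¹ * h)) := by
  rw [← mul_assoc, conj1inv]; group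

lemma conj2R (m n : ℤ) (h : F ⧸ N) :
    A ^ m * (B ^ n * h) = C ^ (m * n) * (B ^ n * (A ^ m * h)) := by
  induction m using Int.induction_on generalizing h with
  | zero => simp
  | succ m ih =>
      rw [zpow_add_one, mul_assoc, swapAB, cswapR, ih, ← mul_assoc, ← zpow_add,
        ← mul_assoc (A ^ (m : ℤ)), ← zpow_add_one]
      ring_nf
  | pred m ih =>
      rw [show (-(m : ℤ) - 1) = (-(m:ℤ)) + (-1) by ring, zpow_add, zpow_neg_one,
        mul_assoc, swapAB', cswapR, ih, ← mul_assoc, ← zpow_add,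
        ← mul_assoc (A ^ (-(m:ℤ))), ← zpow_neg_one, ← zpow_add]
      ring_nf

lemma swapBA (m n : ℤ) (h : F ⧸ N) :
    B ^ n * (A ^ m * h) = C ^ (-(m * n)) * (A ^ m * (B ^ n * h)) := by
  rw [conj2R, ← mul_assoc (C ^ (-(m * n))), ← zpow_add]
  simp

lemma merge (p q r s : ℤ) :
    (A ^ p * B ^ q) * (A ^ r * B ^ s) = C ^ (-(q * r)) * (A ^ (p + r) * B ^ (q + s)) := by
  calc (A ^ p * B ^ q) * (A ^ r * B ^ s)
      = A ^ p * (B ^ q * (A ^ r * B ^ s)) := by group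
    _ = A ^ p * (C ^ (-(r * q)) * (A ^ r * (B ^ q * B ^ s))) := by rw [swapBA]
    _ = C ^ (-(q * r)) * (A ^ (p + r) * B ^ (q + s)) := by
        rw [cswapR, show A ^ p * (A ^ r * (B ^ q * B ^ s)) = A ^ (p + r) * B ^ (q + s) from by
          rw [← mul_assoc, ← zpow_add, ← zpow_add], show -(r * q) = -(q * r) by ring]

lemma halfstep (m : ℕ) : (m : ℤ) + (m : ℤ) * ((m : ℤ) - 1) / 2
    = ((m + 1 : ℕ) : ℤ) * (((m + 1 : ℕ) : ℤ) - 1) / 2 := by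
  push_cast
  rw [show ((m:ℤ)+1)*((m:ℤ)+1-1) = (m:ℤ)*((m:ℤ)-1) + (m:ℤ)*2 by ring,
    Int.add_mul_ediv_right _ _ (by norm_num : (2:ℤ) ≠ 0)]
  ring

lemma pow1 (m : ℕ) :
    (A⁻¹ * B) ^ m = C ^ ((m : ℤ) * ((m : ℤ) - 1) / 2) * (A ^ (-(m : ℤ)) * B ^ (m : ℤ)) := by
  induction m with
  | zero => simp
  | succ m ih =>
      have h1 : A⁻¹ * B = A ^ (-1 : ℤ) * B ^ (1 : ℤ) := by group
      rw [pow_succ, ih, h1, mul_assoc, merge, cswapR, ← mul_assoc, ← zpow_add]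
      rw [show -((m:ℤ) * -1) + (m:ℤ) * ((m:ℤ) - 1) / 2
            = ((m + 1 : ℕ) : ℤ) * (((m + 1 : ℕ) : ℤ) - 1) / 2 from by
          rw [← halfstep m]; ring,
        show (-(m:ℤ) + -1) = -((m + 1 : ℕ) : ℤ) from by push_cast; ring,
        show ((m:ℤ) + 1) = ((m + 1 : ℕ) : ℤ) from by push_cast; ring]

lemma pow2 (m : ℕ) :
    (A * B⁻¹) ^ m = C ^ ((m : ℤ) * ((m : ℤ) - 1) / 2) * (A ^ (m : ℤ) * B ^ (-(m : ℤ))) := by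
  induction m with
  | zero => simp
  | succ m ih =>
      have h1 : A * B⁻¹ = A ^ (1 : ℤ) * B ^ (-1 : ℤ) := by group
      rw [pow_succ, ih, h1, mul_assoc, merge, cswapR, ← mul_assoc, ← zpow_add]
      rw [show -(-(m:ℤ) * 1) + (m:ℤ) * ((m:ℤ) - 1) / 2
            = ((m + 1 : ℕ) : ℤ) * (((m + 1 : ℕ) : ℤ) - 1) / 2 from by
          rw [← halfstep m]; ring,
        show ((m:ℤ) + 1) = ((m + 1 : ℕ) : ℤ) from by push_cast; ring,
        show (-(m:ℤ) + -1) = -((m + 1 : ℕ) : ℤ) from by push_cast; ring]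

lemma mkA : mkQ fa = A := rfl
lemma mkB : mkQ fb = B := rfl

lemma quad (K M : ℤ) :
    (A ^ K * B ^ K) * ((A ^ (-M) * B ^ M) * ((A ^ (-K) * B ^ (-K)) * (A ^ M * B ^ (-M))))
      = C ^ (K ^ 2 + 2 * K * M - M ^ 2) := by
  rw [merge (-K) (-K) M (-M), cswapR, merge (-M) M, cswapR, cswapR, merge K K]
  rw [show K + (-M + (-K + M)) = 0 by ring, show K + (M + (-K + -M)) = 0 by ring]
  simp only [zpow_zero, one_mul, mul_one, ← zpow_add]
  congr 1
  ring

noncomputable def xExp (k : ℕ) : ℤ := 3 * (k : ℤ) ^ 2 - 3 * (k : ℤ) + 1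

lemma main (k : ℕ) (hk : 1 ≤ k) : mkQ (xElt k) = C ^ xExp k := by
  set m : ℕ := k - 1 with hmdef
  have hM : (m : ℤ) = (k : ℤ) - 1 := by omega
  have expand : mkQ (xElt k)
      = (A ^ (k:ℤ) * B ^ (k:ℤ)) * ((A⁻¹ * B) ^ m
        * ((A ^ (-(k:ℤ)) * B ^ (-(k:ℤ))) * (A * B⁻¹) ^ m)) := by
    unfold xElt
    simp only [map_mul, map_pow, map_inv, mkA, mkB]
    group
    rw [← hmdef]
  obtain ⟨t, ht⟩ := Int.even_mul_succ_self ((m:ℤ) - 1)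
  have ht' : (m:ℤ) * ((m:ℤ) - 1) = 2 * t := by
    rw [show (m:ℤ) * ((m:ℤ) - 1) = ((m:ℤ) - 1) * (((m:ℤ) - 1) + 1) by ring, ht]; ring
  have het : (m:ℤ) * ((m:ℤ) - 1) / 2 = t := by omega
  rw [expand, pow1, pow2, het]
  calc (A ^ (k:ℤ) * B ^ (k:ℤ)) * ((C ^ t * (A ^ (-(m:ℤ)) * B ^ (m:ℤ)))
        * ((A ^ (-(k:ℤ)) * B ^ (-(k:ℤ))) * (C ^ t * (A ^ ((m:ℤ)) * B ^ (-(m:ℤ))))))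
      = C ^ t * (C ^ t * ((A ^ (k:ℤ) * B ^ (k:ℤ)) * ((A ^ (-(m:ℤ)) * B ^ (m:ℤ))
          * ((A ^ (-(k:ℤ)) * B ^ (-(k:ℤ))) * (A ^ ((m:ℤ)) * B ^ (-(m:ℤ))))))) := by
        simp only [mul_assoc, cswapR]
    _ = C ^ t * (C ^ t * C ^ ((k:ℤ) ^ 2 + 2 * (k:ℤ) * (m:ℤ) - (m:ℤ) ^ 2)) := by
        rw [quad]
    _ = C ^ xExp k := by
        simp only [← zpow_add]
        congr 1
        unfold xExp
        linear_combination -ht' + (2 * (k:ℤ) - 1) * hM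

/-- let `π : [F,F] → [F,F]/[[F,F],F] ≅ ℤ` be the quotient map,
normalized so that `π([a,b]) = 1`.  Then `π(x_k) = 3k² − 3k + 1`. -/
theorem stmt11 (π : (commutator F) →* Multiplicative ℤ)
    (hker : ∀ (w : F) (hw : w ∈ ⁅commutator F, (⊤ : Subgroup F)⁆)
      (hw' : w ∈ commutator F), π ⟨w, hw'⟩ = 1)
    (hgen : ∀ h : ⁅fa, fb⁆ ∈ commutator F,
      π ⟨⁅fa, fb⁆, h⟩ = Multiplicative.ofAdd 1)
    (k : ℕ) (hk : 1 ≤ k) (hx : xElt k ∈ commutator F) :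
    π ⟨xElt k, hx⟩ = Multiplicative.ofAdd (3 * (k : ℤ) ^ 2 - 3 * k + 1) := by
  set n : ℤ := 3 * (k : ℤ) ^ 2 - 3 * k + 1 with hn
  have hmain : mkQ (xElt k) = C ^ n := main k hk
  have hone : mkQ (xElt k * (⁅fa, fb⁆ ^ n)⁻¹) = 1 := by
    rw [map_mul, map_inv, map_zpow, hmain]
    show C ^ n * (C ^ n)⁻¹ = 1
    group
  have hxn : xElt k * (⁅fa, fb⁆ ^ n)⁻¹ ∈ ⁅commutator F, (⊤ : Subgroup F)⁆ :=
    (QuotientGroup.eq_one_iff _).mp hone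
  have hmem2 : ⁅fa, fb⁆ ^ n ∈ commutator F := Subgroup.zpow_mem _ hfc n
  have hmem1 : xElt k * (⁅fa, fb⁆ ^ n)⁻¹ ∈ commutator F := mul_mem hx (inv_mem hmem2)
  have hsplit : (⟨xElt k, hx⟩ : commutator F)
      = ⟨xElt k * (⁅fa, fb⁆ ^ n)⁻¹, hmem1⟩ * (⟨⁅fa, fb⁆, hfc⟩ : commutator F) ^ n := by
    ext
    push_cast
    group
  rw [hsplit, map_mul, map_zpow, hker _ hxn hmem1, hgen hfc, one_mul, ← ofAdd_zsmul,
    smul_eq_mul, mul_one]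
end

section
/- Let F be the free group on a, b and x_k = a^k b^k (a^{-1}b)^{k-1} a^{-k} b^{-k} (ab^{-1})^{k-1} for positive integers k. If k ≠ l, then x_k and x_l lie in distinct Aut(F)-orbits in F. -/
/-- The discrete Heisenberg group, realized on `ℤ³`. -/
@[ext] structure H where
  x : ℤ
  y : ℤ
  z : ℤ

namespace H

def hmul (a b : H) : H := ⟨a.x + b.x, a.y + b.y, a.z + b.z + a.x * b.y⟩
def hinv (a : H) : H := ⟨-a.x, -a.y, -a.z + a.x * a.y⟩

instance : Group H where
  mul := hmul
  one := ⟨0, 0, 0⟩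
  inv := hinv
  mul_assoc a b c := by
    show hmul (hmul a b) c = hmul a (hmul b c)
    simp only [hmul]; ext <;> ring
  one_mul a := by show hmul ⟨0,0,0⟩ a = a; simp [hmul]
  mul_one a := by show hmul a ⟨0,0,0⟩ = a; simp [hmul]
  inv_mul_cancel a := by
    show hmul (hinv a) a = ⟨0,0,0⟩
    simp only [hmul, hinv]; ext <;> ring

@[simp] lemma mul_x (a b : H) : (a * b).x = a.x + b.x := rfl
@[simp] lemma mul_y (a b : H) : (a * b).y = a.y + b.y := rfl
@[simp] lemma mul_z (a b : H) : (a * b).z = a.z + b.z + a.x * b.y := rfl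
@[simp] lemma inv_x (a : H) : (a⁻¹).x = -a.x := rfl
@[simp] lemma inv_y (a : H) : (a⁻¹).y = -a.y := rfl
@[simp] lemma inv_z (a : H) : (a⁻¹).z = -a.z + a.x * a.y := rfl
@[simp] lemma one_x : (1 : H).x = 0 := rfl
@[simp] lemma one_y : (1 : H).y = 0 := rfl
@[simp] lemma one_z : (1 : H).z = 0 := rfl

lemma choose_two (n : ℕ) : ((n.choose 2 : ℕ) : ℤ) * 2 = n * (n - 1) := by
  induction n with
  | zero => simp
  | succ n ih =>
    rw [Nat.choose_succ_succ, Nat.choose_one_right]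
    push_cast
    push_cast at ih
    ring_nf
    ring_nf at ih
    nlinarith [ih]

lemma pow_def (a : H) (n : ℕ) :
    a ^ n = ⟨n * a.x, n * a.y, n * a.z + (n.choose 2 : ℕ) * (a.x * a.y)⟩ := by
  induction n with
  | zero => ext <;> simp
  | succ n ih =>
    rw [pow_succ, ih]
    ext <;> simp <;> push_cast [Nat.choose_succ_succ, Nat.choose_one_right] <;> ring

/-- The value of the word `x_{m+1}` on two arbitrary elements of the Heisenberg group. -/
lemma key (A B : H) (m : ℕ) :
    A ^ (m+1) * B ^ (m+1) * (A⁻¹ * B) ^ m * (A ^ (m+1))⁻¹ * (B ^ (m+1))⁻¹ * (A * B⁻¹) ^ m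
      = ⟨0, 0, (3 * (m:ℤ)^2 + 3 * m + 1) * (A.x * B.y - A.y * B.x)⟩ := by
  have h2 := choose_two m
  push_cast at h2
  ext <;> simp [pow_def] <;> push_cast
  · ring
  · ring
  · linear_combination ((A.x - B.x) * (A.y - B.y)) * h2

end H

/-- The homomorphism from `F` to the Heisenberg group sending `a`, `b` to the two
standard generators. -/
noncomputable def hei : F →* H :=
  FreeGroup.lift (fun i => if i = 0 then ⟨1, 0, 0⟩ else ⟨0, 1, 0⟩)

@[simp] lemma hei_fa : hei fa = ⟨1, 0, 0⟩ := by simp [hei]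
@[simp] lemma hei_fb : hei fb = ⟨0, 1, 0⟩ := by simp [hei]

/-- Composition with an endomorphism acts on the `(x, y)`-components (the abelianization)
by the abelianized matrix of the endomorphism. -/
lemma compXY (g : F →* F) (w : F) :
    (hei (g w)).x = (hei (g fa)).x * (hei w).x + (hei (g fb)).x * (hei w).y ∧
    (hei (g w)).y = (hei (g fa)).y * (hei w).x + (hei (g fb)).y * (hei w).y := by
  induction w using FreeGroup.induction_on with
  | C1 => simp
  | of i =>
    fin_cases i <;>
      simp [show (pure (0 : Fin 2) : F) = fa from rfl,
        show (pure (1 : Fin 2) : F) = fb from rfl]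
  | inv_of i ih =>
    obtain ⟨h1, h2⟩ := ih
    constructor <;> simp [map_inv, h1, h2] <;> ring
  | mul u v ihu ihv =>
    obtain ⟨hu1, hu2⟩ := ihu
    obtain ⟨hv1, hv2⟩ := ihv
    constructor <;> simp [map_mul, hu1, hu2, hv1, hv2] <;> ring

/-- if `k ≠ l` then `x_k` and `x_l` lie in distinct
`Aut(F)`-orbits in `F`. -/
theorem stmt15 (k l : ℕ) (hk : 1 ≤ k) (hl : 1 ≤ l) (hkl : k ≠ l) :
    ¬ ∃ φ : F ≃* F, φ (xElt k) = xElt l := by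
  rintro ⟨φ, hφ⟩
  obtain ⟨m, rfl⟩ : ∃ m, k = m + 1 := ⟨k - 1, by omega⟩
  obtain ⟨n, rfl⟩ : ∃ n, l = n + 1 := ⟨l - 1, by omega⟩
  set A : H := hei (φ fa) with hA
  set B : H := hei (φ fb) with hB
  set A' : H := hei (φ.symm fa) with hA'
  set B' : H := hei (φ.symm fb) with hB'
  -- image of x_{m+1} under hei ∘ φ
  have e1 : hei (φ (xElt (m+1))) =
      ⟨0, 0, (3 * (m:ℤ)^2 + 3 * m + 1) * (A.x * B.y - A.y * B.x)⟩ := by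
    simp only [xElt, Nat.add_sub_cancel, map_mul, map_pow, map_inv, ← hA, ← hB]
    exact H.key A B m
  -- image of x_{n+1} under hei
  have e2 : hei (xElt (n+1)) = ⟨0, 0, 3 * (n:ℤ)^2 + 3 * n + 1⟩ := by
    simp only [xElt, Nat.add_sub_cancel, map_mul, map_pow, map_inv]
    rw [H.key]
    simp
  have hz : (3 * (m:ℤ)^2 + 3 * m + 1) * (A.x * B.y - A.y * B.x)
      = 3 * (n:ℤ)^2 + 3 * n + 1 := by
    have := congrArg H.z (e1.symm.trans (by rw [hφ, e2]))
    simpa using this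
  -- the abelianized matrices of φ and φ⁻¹ are inverse to each other
  have ca := compXY φ.toMonoidHom (φ.symm fa)
  have cb := compXY φ.toMonoidHom (φ.symm fb)
  simp only [MulEquiv.coe_toMonoidHom, MulEquiv.apply_symm_apply, hei_fa, hei_fb,
    ← hA, ← hB, ← hA', ← hB'] at ca cb
  obtain ⟨h1, h2⟩ := ca
  obtain ⟨h3, h4⟩ := cb
  -- determinants multiply to 1
  have hD : (A.x * B.y - A.y * B.x) * (A'.x * B'.y - A'.y * B'.x) = 1 := by
    linear_combination (-(A.y * B'.x + B.y * B'.y)) * h1 - h4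
      + (A.y * A'.x + B.y * A'.y) * h3
  have hmn : (m : ℤ) ≠ n := by
    intro h
    exact hkl (by exact_mod_cast congrArg (· + 1) (Nat.cast_injective h : m = n))
  rcases Int.eq_one_or_neg_one_of_mul_eq_one hD with h | h
  · rw [h, mul_one] at hz
    rcases lt_or_gt_of_ne hmn with hlt | hlt <;> nlinarith
  · rw [h, mul_neg_one] at hz
    have hm0 : (0:ℤ) ≤ m := Int.natCast_nonneg m
    have hn0 : (0:ℤ) ≤ n := Int.natCast_nonneg n
    nlinarith
end
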